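/- Let y¹,…,y^N ∈ ℝⁿ be unit vectors and λ₁,…,λ_N > 0 with ∑ᵢ λᵢ yⁱ(yⁱ)ᵀ = (τ/n)·I_n where τ = ∑ᵢλᵢ, and suppose N ≥ 1 and the yⁱ are pairwise distinct with ⟨yⁱ,yʲ⟩ = -1/n for all i ≠ j and ∑ᵢ λᵢ yⁱ = 0. Then N = n+1 and λᵢ = τ/(n+1) for all i. -/

import Mathlib

/-!
Pairing the balance condition `∑ λᵢ yⁱ = 0` with a fixed `yʲ` and using the Gram matrix
`⟪yʲ, yⁱ⟫ = c + (1 - c) δᵢⱼ` gives `c τ + (1 - c) λⱼ = 0`; for `c = -1/n` every weight is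
`τ / (n + 1)`, and summing the weights forces `N = n + 1`.
-/

open scoped RealInnerProductSpace

open Finset

section Equiangular

variable {E ι : Type*} [NormedAddCommGroup E] [InnerProductSpace ℝ E] [Fintype ι]

theorem one_sub_mul_weight_eq_of_sum_smul_eq_zero {y : ι → E} (hnorm : ∀ i, ‖y i‖ = 1)
    {c : ℝ} (hinner : ∀ i j, i ≠ j → ⟪y i, y j⟫ = c) {lam : ι → ℝ}
    (hbal : ∑ i, lam i • y i = 0) (j : ι) :
    (1 - c) * lam j = -c * ∑ i, lam i := by
  classical
  have hgram : ∀ i, lam i * ⟪y j, y i⟫ = c * lam i + if i = j then (1 - c) * lam i else 0 := by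
    intro i
    split_ifs with hij
    · rw [hij, real_inner_self_eq_norm_sq, hnorm]; ring
    · rw [hinner j i (Ne.symm hij)]; ring
  have hpair : ⟪y j, ∑ i, lam i • y i⟫ = 0 := by rw [hbal, inner_zero_right]
  simp only [inner_sum, real_inner_smul_right, hgram, sum_add_distrib, ← mul_sum,
    sum_ite_eq', mem_univ, if_true] at hpair
  linarith

theorem weight_eq_of_inner_eq_neg_inv {n : ℕ} (hn : 0 < n) {y : ι → E}
    (hnorm : ∀ i, ‖y i‖ = 1) (hinner : ∀ i j, i ≠ j → ⟪y i, y j⟫ = -(1 / n : ℝ))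
    {lam : ι → ℝ} (hbal : ∑ i, lam i • y i = 0) (j : ι) :
    lam j = (∑ i, lam i) / (n + 1) := by
  have h := one_sub_mul_weight_eq_of_sum_smul_eq_zero hnorm hinner hbal j
  have hn0 : (n : ℝ) ≠ 0 := Nat.cast_ne_zero.mpr hn.ne'
  field_simp at h ⊢
  linarith

end Equiangular

theorem card_eq_of_forall_eq_sum_div {N : ℕ} {lam : Fin N → ℝ} (hlam : ∀ i, 0 < lam i)
    {m : ℝ} (hm : m ≠ 0) (heq : ∀ i, lam i = (∑ j, lam j) / m) (hN : 0 < N) :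
    (N : ℝ) = m := by
  have hτ : 0 < ∑ j, lam j := sum_pos (fun i _ => hlam i) (univ_nonempty_iff.mpr ⟨⟨0, hN⟩⟩)
  have hsum : ∑ j, lam j = N * ((∑ j, lam j) / m) := by
    conv_lhs => rw [sum_congr rfl fun i _ => heq i]
    simp
  field_simp at hsum
  exact hsum.symm

theorem stmt_16 {n N : ℕ} (hn : 0 < n) (hN : 0 < N)
    (y : Fin N → EuclideanSpace ℝ (Fin n)) (hnorm : ∀ i, ‖y i‖ = 1)
    (hinner : ∀ i j, i ≠ j → ⟪y i, y j⟫ = -(1 / n : ℝ))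
    (lam : Fin N → ℝ) (hlam : ∀ i, 0 < lam i) (τ : ℝ) (hτ : τ = ∑ i, lam i)
    (hbal : ∑ i, lam i • y i = 0) :
    N = n + 1 ∧ ∀ i, lam i = τ / (n + 1) := by
  subst hτ
  have hweight := weight_eq_of_inner_eq_neg_inv hn hnorm hinner hbal
  refine ⟨?_, hweight⟩
  exact_mod_cast card_eq_of_forall_eq_sum_div hlam (by positivity) hweight hN
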